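/- arXiv:2210.15725 — 2 statements merged into one kernel-verified Lean document; each statement's English description precedes it below -/
import Mathlib

section
/- Let P₁(t),…,P_d(t) be a smooth family of mutually disjoint rank-one projections on ℂ^d summing to the identity (P_j P_k = δ_{jk} P_j, ∑_j P_j = 1), let K(t) = ∑_j (∂ₜP_j(t)) P_j(t), and let W(t,s) solve ∂ₜW = K(t)W, W(s,s) = 1. Then the Kato intertwining relation holds: W(t,s) P_j(s) = P_j(t) W(t,s) for all j and all s, t. -/
open MeasureTheory

set_option maxHeartbeats 1000000 in
/-- Kato's intertwining relation `W(t,s)P_j(s) = P_j(t)W(t,s)` for the propagator of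
`K(t) = ∑_j (∂ₜP_j(t))P_j(t)`, where the `P_j(t)` are smooth mutually disjoint rank-one
projections summing to the identity. -/
theorem kato_intertwining {d : ℕ}
    (P : Fin d → ℝ → (EuclideanSpace ℂ (Fin d) →L[ℂ] EuclideanSpace ℂ (Fin d)))
    (hsmooth : ∀ j, ContDiff ℝ (⊤ : ℕ∞) (P j))
    (hdisj : ∀ (t : ℝ) (j k : Fin d), P j t * P k t = if j = k then P j t else 0)
    (hrank : ∀ (t : ℝ) (j : Fin d),
      Module.finrank ℂ (LinearMap.range ((P j t) : EuclideanSpace ℂ (Fin d) →ₗ[ℂ] EuclideanSpace ℂ (Fin d))) = 1)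
    (hcompl : ∀ t : ℝ, ∑ j, P j t = 1)
    (W : ℝ → ℝ → (EuclideanSpace ℂ (Fin d) →L[ℂ] EuclideanSpace ℂ (Fin d)))
    (hODE : ∀ s t : ℝ, HasDerivAt (fun τ => W τ s)
      ((∑ j, deriv (P j) t * P j t) * W t s) t)
    (hinit : ∀ s : ℝ, W s s = 1) :
    ∀ (j : Fin d) (s t : ℝ), W t s * P j s = P j t * W t s := by
  classical
  let K : ℝ → (EuclideanSpace ℂ (Fin d) →L[ℂ] EuclideanSpace ℂ (Fin d)) :=
    fun t => ∑ j, deriv (P j) t * P j t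
  have hK : ∀ t, K t = ∑ j, deriv (P j) t * P j t := fun _ => rfl
  -- derivatives of the projections
  have hPd : ∀ (k : Fin d) (t : ℝ), HasDerivAt (P k) (deriv (P k) t) t := fun k t =>
    (((hsmooth k).differentiable (by simp)) t).hasDerivAt
  -- the Kato commutator identity: P_j' = [K, P_j]
  have hkey : ∀ (j : Fin d) (t : ℝ),
      deriv (P j) t = K t * P j t - P j t * K t := by
    intro j t
    have hprod : ∀ k : Fin d,
        deriv (P j) t * P k t + P j t * deriv (P k) t
          = if j = k then deriv (P j) t else 0 := by
      intro k
      have h1 : HasDerivAt (fun τ => P j τ * P k τ)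
          (deriv (P j) t * P k t + P j t * deriv (P k) t) t :=
        (hPd j t).mul (hPd k t)
      have h2 : HasDerivAt (fun τ => P j τ * P k τ)
          (if j = k then deriv (P j) t else 0) t := by
        by_cases h : j = k
        · subst h
          simp only [if_pos rfl]
          have : (fun τ => P j τ * P j τ) = P j := by
            funext τ; simpa using hdisj τ j j
          rw [this]; exact hPd j t
        · simp only [if_neg h]
          have : (fun τ => P j τ * P k τ) = fun _ => (0 : _) := by
            funext τ; simpa [h] using hdisj τ j k
          rw [this]; exact hasDerivAt_const t 0
      exact h1.unique h2
    have hKP : K t * P j t = deriv (P j) t * P j t := by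
      rw [hK, Finset.sum_mul]
      have : ∀ k ∈ Finset.univ, deriv (P k) t * P k t * P j t
          = if k = j then deriv (P j) t * P j t else 0 := by
        intro k _
        rw [mul_assoc, hdisj t k j]
        by_cases h : k = j <;> simp [h]
      rw [Finset.sum_congr rfl this, Finset.sum_ite_eq' Finset.univ j]
      simp
    have hPK : P j t * K t = deriv (P j) t * P j t - deriv (P j) t := by
      rw [hK, Finset.mul_sum]
      have : ∀ k ∈ Finset.univ, P j t * (deriv (P k) t * P k t)
          = (if j = k then deriv (P j) t * P k t else 0) - deriv (P j) t * P k t := by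
        intro k _
        have h := hprod k
        have h' : P j t * deriv (P k) t
            = (if j = k then deriv (P j) t else 0) - deriv (P j) t * P k t := by
          rw [← h]; abel
        rw [← mul_assoc, h', sub_mul]
        congr 1
        · by_cases h : j = k <;> simp [h, ← mul_assoc]
        · rw [mul_assoc, hdisj t k k]; simp
      rw [Finset.sum_congr rfl this, Finset.sum_sub_distrib]
      congr 1
      · rw [Finset.sum_ite_eq Finset.univ j]; simp
      · rw [← Finset.mul_sum, hcompl t, mul_one]
    rw [hKP, hPK]; abel
  -- continuity of K
  have hKcont : Continuous K := by
    apply continuous_finset_sum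
    intro j _
    exact ((hsmooth j).continuous_deriv (by simp)).mul (hsmooth j).continuous
  intro j s t
  -- Set up the two solutions of the same linear ODE
  set f : ℝ → (EuclideanSpace ℂ (Fin d) →L[ℂ] EuclideanSpace ℂ (Fin d)) :=
    fun τ => W τ s * P j s with hf
  set g : ℝ → (EuclideanSpace ℂ (Fin d) →L[ℂ] EuclideanSpace ℂ (Fin d)) :=
    fun τ => P j τ * W τ s with hg
  have hf' : ∀ τ : ℝ, HasDerivAt f (K τ * f τ) τ := by
    intro τ
    have h1 := (hODE s τ).mul_const (P j s)
    have h2 : (∑ k, deriv (P k) τ * P k τ) * W τ s * P j s = K τ * f τ := by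
      rw [hK, hf, mul_assoc]
    rwa [h2] at h1
  have hg' : ∀ τ : ℝ, HasDerivAt g (K τ * g τ) τ := by
    intro τ
    have h1 : HasDerivAt g
        (deriv (P j) τ * W τ s + P j τ * ((∑ k, deriv (P k) τ * P k τ) * W τ s)) τ :=
      (hPd j τ).mul (hODE s τ)
    have h2 : deriv (P j) τ * W τ s + P j τ * ((∑ k, deriv (P k) τ * P k τ) * W τ s)
        = K τ * g τ := by
      rw [← hK, hkey j τ, hg]
      simp only [sub_mul, mul_assoc]
      abel
    rwa [h2] at h1
  have hinit' : f s = g s := by simp [hf, hg, hinit s]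
  -- uniqueness via Grönwall on a compact interval containing s and t
  set a : ℝ := min s t - 1 with ha
  set b : ℝ := max s t + 1 with hb
  have has : a < s := by have := min_le_left s t; rw [ha]; linarith
  have hsb : s < b := by have := le_max_left s t; rw [hb]; linarith
  have hat : a ≤ t := by have := min_le_right s t; rw [ha]; linarith
  have htb : t ≤ b := by have := le_max_right s t; rw [hb]; linarith
  -- bound the norm of K on [a, b]
  obtain ⟨C, hC⟩ : ∃ C, ∀ τ ∈ Set.Icc a b, ‖K τ‖ ≤ C :=
    (isCompact_Icc.exists_bound_of_continuousOn hKcont.continuousOn)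
  set Kc : NNReal := Real.toNNReal C with hKc
  -- the (clamped) vector field
  set v : ℝ → (EuclideanSpace ℂ (Fin d) →L[ℂ] EuclideanSpace ℂ (Fin d)) →
      (EuclideanSpace ℂ (Fin d) →L[ℂ] EuclideanSpace ℂ (Fin d)) :=
    fun τ x => K (max a (min b τ)) * x with hv
  have hvmem : ∀ τ : ℝ, max a (min b τ) ∈ Set.Icc a b := by
    intro τ
    refine ⟨le_max_left _ _, max_le (le_trans hat htb) (min_le_left _ _)⟩
  have hvlip : ∀ τ : ℝ, LipschitzOnWith Kc (v τ)
      (Set.univ : Set (EuclideanSpace ℂ (Fin d) →L[ℂ] EuclideanSpace ℂ (Fin d))) := by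
    intro τ
    apply LipschitzWith.lipschitzOnWith
    apply LipschitzWith.of_dist_le_mul
    intro x y
    simp only [hv, dist_eq_norm, ← mul_sub]
    calc ‖K (max a (min b τ)) * (x - y)‖
        ≤ ‖K (max a (min b τ))‖ * ‖x - y‖ := norm_mul_le _ _
      _ ≤ (Kc : ℝ) * ‖x - y‖ := by
          apply mul_le_mul_of_nonneg_right _ (norm_nonneg _)
          exact le_trans (hC _ (hvmem τ)) (Real.le_coe_toNNReal C)
  have hclamp : ∀ τ ∈ Set.Ioo a b, max a (min b τ) = τ := by
    intro τ hτ
    rw [min_eq_right hτ.2.le, max_eq_right hτ.1.le]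
  have heq : Set.EqOn f g (Set.Icc a b) := by
    apply ODE_solution_unique_of_mem_Icc (v := v)
      (s := fun _ => (Set.univ : Set (EuclideanSpace ℂ (Fin d) →L[ℂ] EuclideanSpace ℂ (Fin d))))
      (K := Kc) (fun τ _ => hvlip τ) ⟨has, hsb⟩
    · exact (fun τ _ => (hf' τ).continuousAt.continuousWithinAt : ContinuousOn f _)
    · intro τ hτ
      have h := hf' τ
      have : v τ (f τ) = K τ * f τ := by rw [hv]; simp only [hclamp τ hτ]
      rwa [this]
    · intro τ _; trivial
    · exact (fun τ _ => (hg' τ).continuousAt.continuousWithinAt : ContinuousOn g _)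
    · intro τ hτ
      have h := hg' τ
      have : v τ (g τ) = K τ * g τ := by rw [hv]; simp only [hclamp τ hτ]
      rwa [this]
    · intro τ _; trivial
    · exact hinit'
  exact heq ⟨hat, htb⟩
end

section
/- Let G(t) = ∑_{j=1}^d μ_j(t) P_j(t) where P_j(t) are disjoint projections summing to the identity (a smooth spectral resolution), and define Ψ(t,s) = ∑_j P_j(s) e^{-(i/ε) ∫_s^t μ_j(u) du}. Let K(t) = ∑_j (∂ₜP_j(t)) P_j(t) and let W(t,s) solve ∂ₜW = K W, W(s,s)=1. Then V(t,s) := W(t,s) Ψ(t,s) solves the adiabatic equation iε ∂ₜ V(t,s) = [G(t) + iε K(t)] V(t,s), V(s,s) = 1. -/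
open MeasureTheory

section Helpers

open Set

private lemma adiabatic_ode_zero {E : Type*} [NormedRing E] [NormedAlgebra ℝ E] [CompleteSpace E]
    (A : ℝ → E) (hA : Continuous A)
    (f : ℝ → E) (hf : ∀ t, HasDerivAt f (A t * f t) t)
    (s : ℝ) (h0 : f s = 0) : ∀ t, f t = 0 := by
  intro t
  set a := min s t - 1 with ha
  set b := max s t + 1 with hb
  have has : a < s := by have := min_le_left s t; simp only [ha]; linarith
  have hsb : s < b := by have := le_max_left s t; simp only [hb]; linarith
  have hta : a ≤ t := by have := min_le_right s t; simp only [ha]; linarith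
  have htb : t ≤ b := by have := le_max_right s t; simp only [hb]; linarith
  obtain ⟨C, hC⟩ := (isCompact_Icc (a := a) (b := b)).exists_bound_of_continuousOn hA.continuousOn
  set L : NNReal := ⟨max C 0, le_max_right _ _⟩ with hL
  set v : ℝ → E → E := fun τ x => A (max a (min b τ)) * x with hv
  have hvL : ∀ τ, LipschitzWith L (v τ) := by
    intro τ
    apply LipschitzWith.of_dist_le_mul
    intro x y
    have hmem : max a (min b τ) ∈ Icc a b := by
      constructor
      · exact le_max_left _ _
      · exact max_le (le_of_lt (has.trans hsb)) (min_le_left _ _)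
    calc dist (v τ x) (v τ y) = ‖A (max a (min b τ)) * (x - y)‖ := by
            rw [dist_eq_norm, hv]; ring_nf; rw [mul_sub]
      _ ≤ ‖A (max a (min b τ))‖ * ‖x - y‖ := norm_mul_le _ _
      _ ≤ L * ‖x - y‖ := by
            apply mul_le_mul_of_nonneg_right _ (norm_nonneg _)
            exact (hC _ hmem).trans (le_max_left _ _)
      _ = L * dist x y := by rw [dist_eq_norm]
  have key := ODE_solution_unique_of_mem_Icc (v := v) (s := fun _ => (univ : Set E))
    (K := L) (t₀ := s) (a := a) (b := b) (f := f) (g := fun _ => 0)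
    (fun τ _ => (hvL τ).lipschitzOnWith) ⟨has, hsb⟩
    (fun τ _ => (hf τ).continuousAt.continuousWithinAt)
    (fun τ hτ => by
      have : v τ (f τ) = A τ * f τ := by
        rw [hv]; simp only
        rw [min_eq_right hτ.2.le, max_eq_right hτ.1.le]
      rw [this]; exact hf τ)
    (fun _ _ => trivial)
    continuousOn_const
    (fun τ _ => by simpa [hv] using hasDerivAt_const τ (0 : E))
    (fun _ _ => trivial)
    (by simpa using h0)
  exact key ⟨hta, htb⟩

variable {d : ℕ}

private lemma adiabatic_comm_id
    (P : Fin d → ℝ → (EuclideanSpace ℂ (Fin d) →L[ℂ] EuclideanSpace ℂ (Fin d)))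
    (hP : ∀ j, ContDiff ℝ (⊤ : ℕ∞) (P j))
    (hdisj : ∀ (t : ℝ) (j k : Fin d), P j t * P k t = if j = k then P j t else 0)
    (hcompl : ∀ t : ℝ, ∑ j, P j t = 1) (t : ℝ) (k : Fin d) :
    deriv (P k) t =
      (∑ j, deriv (P j) t * P j t) * P k t - P k t * (∑ j, deriv (P j) t * P j t) := by
  have hd : ∀ j, HasDerivAt (P j) (deriv (P j) t) t :=
    fun j => (((hP j).differentiable (by simp)) t).hasDerivAt
  have hprod : ∀ j l : Fin d, deriv (P j) t * P l t + P j t * deriv (P l) t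
      = if j = l then deriv (P j) t else 0 := by
    intro j l
    have h1 : HasDerivAt (fun τ => P j τ * P l τ)
        (deriv (P j) t * P l t + P j t * deriv (P l) t) t := (hd j).mul (hd l)
    by_cases hjl : j = l
    · subst hjl
      have h2 : (fun τ => P j τ * P j τ) = P j := by
        funext τ; simpa using hdisj τ j j
      rw [h2] at h1
      simp only [if_pos rfl]
      exact (h1.deriv).symm ▸ ((hd j).unique h1).symm
    · have h2 : (fun τ => P j τ * P l τ)
          = fun _ => (0 : EuclideanSpace ℂ (Fin d) →L[ℂ] EuclideanSpace ℂ (Fin d)) := by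
        funext τ; simpa [hjl] using hdisj τ j l
      rw [h2] at h1
      simp only [if_neg hjl]
      exact ((hasDerivAt_const t 0).unique h1).symm
  have hKP : (∑ j, deriv (P j) t * P j t) * P k t = deriv (P k) t * P k t := by
    rw [Finset.sum_mul]
    rw [Finset.sum_eq_single k]
    · rw [mul_assoc, hdisj t k k]; simp
    · intro j _ hjk
      rw [mul_assoc, hdisj t j k, if_neg hjk, mul_zero]
    · simp
  have hPK : P k t * (∑ j, deriv (P j) t * P j t)
      = deriv (P k) t * P k t - deriv (P k) t := by
    rw [Finset.mul_sum]
    have hterm : ∀ j, P k t * (deriv (P j) t * P j t)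
        = (if k = j then deriv (P k) t * P j t else 0) - deriv (P k) t * P j t := by
      intro j
      have h := hprod k j
      have : P k t * deriv (P j) t
          = (if k = j then deriv (P k) t else 0) - deriv (P k) t * P j t := by
        linear_combination (norm := abel) h
      rw [← mul_assoc, this, sub_mul, mul_assoc, hdisj t j j, if_pos rfl]
      by_cases hkj : k = j <;> simp [hkj]
    calc ∑ j, P k t * (deriv (P j) t * P j t)
        = ∑ j, ((if k = j then deriv (P k) t * P j t else 0) - deriv (P k) t * P j t) :=
          Finset.sum_congr rfl fun j _ => hterm j
      _ = deriv (P k) t * P k t - deriv (P k) t := by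
          rw [Finset.sum_sub_distrib, Finset.sum_ite_eq (Finset.univ) k
            (fun j => deriv (P k) t * P j t)]
          simp [← Finset.mul_sum, hcompl t]
  rw [hKP, hPK]; abel

private lemma adiabatic_intertwine
    (P : Fin d → ℝ → (EuclideanSpace ℂ (Fin d) →L[ℂ] EuclideanSpace ℂ (Fin d)))
    (hP : ∀ j, ContDiff ℝ (⊤ : ℕ∞) (P j))
    (hdisj : ∀ (t : ℝ) (j k : Fin d), P j t * P k t = if j = k then P j t else 0)
    (hcompl : ∀ t : ℝ, ∑ j, P j t = 1)
    (W : ℝ → ℝ → (EuclideanSpace ℂ (Fin d) →L[ℂ] EuclideanSpace ℂ (Fin d)))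
    (hODE : ∀ s t : ℝ, HasDerivAt (fun τ => W τ s)
      ((∑ j, deriv (P j) t * P j t) * W t s) t)
    (hinit : ∀ s : ℝ, W s s = 1)
    (s : ℝ) (k : Fin d) (t : ℝ) :
    P k t * W t s = W t s * P k s := by
  set K : ℝ → (EuclideanSpace ℂ (Fin d) →L[ℂ] EuclideanSpace ℂ (Fin d)) :=
    fun t => ∑ j, deriv (P j) t * P j t with hK
  have hKcont : Continuous K :=
    continuous_finset_sum _ fun j _ =>
      ((hP j).continuous_deriv (by simp)).mul (hP j).continuous
  set f : ℝ → (EuclideanSpace ℂ (Fin d) →L[ℂ] EuclideanSpace ℂ (Fin d)) :=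
    fun t => P k t * W t s - W t s * P k s with hfdef
  have hd : ∀ j (t : ℝ), HasDerivAt (P j) (deriv (P j) t) t :=
    fun j t => (((hP j).differentiable (by simp)) t).hasDerivAt
  have hf : ∀ t, HasDerivAt f (K t * f t) t := by
    intro t
    have h1 : HasDerivAt f
        (deriv (P k) t * W t s + P k t * (K t * W t s) - (K t * W t s) * P k s) t :=
      ((hd k t).mul (hODE s t)).sub ((hODE s t).mul_const (P k s))
    convert h1 using 1
    rw [adiabatic_comm_id P hP hdisj hcompl t k]
    show K t * f t
      = (K t * P k t - P k t * K t) * W t s + P k t * (K t * W t s) - K t * W t s * P k s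
    simp only [hfdef]
    simp only [mul_sub, sub_mul, mul_assoc]
    abel
  have := adiabatic_ode_zero K hKcont f hf s (by simp [hfdef, hinit s]) t
  simp only [hfdef] at this
  linear_combination (norm := abel) this

end Helpers

set_option maxHeartbeats 1000000 in
set_option synthInstance.maxHeartbeats 400000 in
/-- The factorization `V(t,s) = W(t,s)Ψ(t,s)` solves the adiabatic equation
`iε∂ₜV = (G(t) + iεK(t))V`, `V(s,s) = 1`, for `G(t) = ∑ μ_j(t)P_j(t)` a smooth spectral
resolution with disjoint complete projections. -/
theorem adiabatic_evolution_factorization {d : ℕ}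
    (P : Fin d → ℝ → (EuclideanSpace ℂ (Fin d) →L[ℂ] EuclideanSpace ℂ (Fin d)))
    (μ : Fin d → ℝ → ℂ)
    (hP : ∀ j, ContDiff ℝ (⊤ : ℕ∞) (P j)) (hμ : ∀ j, Continuous (μ j))
    (hdisj : ∀ (t : ℝ) (j k : Fin d), P j t * P k t = if j = k then P j t else 0)
    (hcompl : ∀ t : ℝ, ∑ j, P j t = 1)
    (ε : ℝ) (hε : 0 < ε)
    (W : ℝ → ℝ → (EuclideanSpace ℂ (Fin d) →L[ℂ] EuclideanSpace ℂ (Fin d)))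
    (hODE : ∀ s t : ℝ, HasDerivAt (fun τ => W τ s)
      ((∑ j, deriv (P j) t * P j t) * W t s) t)
    (hinit : ∀ s : ℝ, W s s = 1)
    (s : ℝ) :
    (∀ t : ℝ, HasDerivAt
      (fun τ => W τ s * ∑ j, Complex.exp (-(Complex.I / ε) * ∫ u in s..τ, μ j u) • P j s)
      (((Complex.I * ε)⁻¹) •
        ((∑ j, μ j t • P j t) + (Complex.I * ε) • (∑ j, deriv (P j) t * P j t)) *
        (W t s * ∑ j, Complex.exp (-(Complex.I / ε) * ∫ u in s..t, μ j u) • P j s)) t) ∧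
    W s s * (∑ j, Complex.exp (-(Complex.I / ε) * ∫ u in s..s, μ j u) • P j s) = 1 := by
  have hεc : (ε : ℂ) ≠ 0 := Complex.ofReal_ne_zero.mpr hε.ne'
  have hne : (Complex.I * ε : ℂ) ≠ 0 := mul_ne_zero Complex.I_ne_zero hεc
  have hIε : ((Complex.I * ε)⁻¹ : ℂ) = -(Complex.I / ε) := by
    rw [mul_inv, Complex.inv_I]; ring
  set c : Fin d → ℝ → ℂ :=
    fun j τ => Complex.exp (-(Complex.I / ε) * ∫ u in s..τ, μ j u) with hcdef
  constructor
  · intro t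
    -- derivative of the phase factors
    have hc : ∀ j, HasDerivAt (c j) (c j t * (-(Complex.I / ε) * μ j t)) t := by
      intro j
      have hint : HasDerivAt (fun τ => ∫ u in s..τ, μ j u) (μ j t) t :=
        ((hμ j).integral_hasStrictDerivAt s t).hasDerivAt
      exact (hint.const_mul (-(Complex.I / (ε : ℂ)))).cexp
    have hΨ : HasDerivAt (fun τ => ∑ j, c j τ • P j s)
        (∑ j, (c j t * (-(Complex.I / ε) * μ j t)) • P j s) t :=
      HasDerivAt.fun_sum fun j _ => (hc j).smul_const (P j s)
    have h := (hODE s t).mul hΨ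
    refine h.congr_deriv (Eq.symm ?_)
    -- algebraic identity
    set K := ∑ j, deriv (P j) t * P j t with hK
    set Ψ := ∑ j, c j t • P j s with hΨdef
    have hGW : (∑ j, μ j t • P j t) * W t s = W t s * ∑ j, μ j t • P j s := by
      rw [Finset.sum_mul, Finset.mul_sum]
      refine Finset.sum_congr rfl fun j _ => ?_
      rw [smul_mul_assoc, mul_smul_comm,
        adiabatic_intertwine P hP hdisj hcompl W hODE hinit s j t]
    have hMΨ : (∑ j, μ j t • P j s) * Ψ = ∑ j, (μ j t * c j t) • P j s := by
      rw [hΨdef, Finset.sum_mul_sum]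
      refine Finset.sum_congr rfl fun j _ => ?_
      rw [Finset.sum_eq_single j]
      · rw [smul_mul_smul_comm, hdisj s j j, if_pos rfl]
      · intro k _ hkj
        rw [smul_mul_smul_comm, hdisj s j k, if_neg (Ne.symm hkj)]
        show (μ j t * c k t) • (0 : EuclideanSpace ℂ (Fin d) →L[ℂ] EuclideanSpace ℂ (Fin d)) = 0
        exact smul_zero (M := ℂ) (A := EuclideanSpace ℂ (Fin d) →L[ℂ] EuclideanSpace ℂ (Fin d)) _
      · simp
    calc (Complex.I * ε)⁻¹ • ((∑ j, μ j t • P j t) + (Complex.I * ε) • K) * (W t s * Ψ)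
        = (Complex.I * ε)⁻¹ • ((∑ j, μ j t • P j t) * (W t s * Ψ))
          + ((Complex.I * ε)⁻¹ * (Complex.I * ε)) • (K * (W t s * Ψ)) := by
          rw [smul_mul_assoc, add_mul, smul_add, smul_mul_assoc, smul_smul]
      _ = (Complex.I * ε)⁻¹ • (W t s * ((∑ j, μ j t • P j s) * Ψ)) + K * W t s * Ψ := by
          rw [inv_mul_cancel₀ hne, one_smul, ← mul_assoc, hGW, mul_assoc, mul_assoc]
      _ = K * W t s * Ψ + W t s * ∑ j, (c j t * (-(Complex.I / ε) * μ j t)) • P j s := by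
          rw [hMΨ, add_comm]
          congr 1
          rw [← mul_smul_comm]
          congr 1
          rw [Finset.smul_sum]
          refine Finset.sum_congr rfl fun j _ => ?_
          rw [smul_smul, hIε]
          congr 1
          ring
  · have : ∀ j : Fin d, c j s = 1 := by
      intro j
      rw [hcdef]
      simp [intervalIntegral.integral_same]
    simp only [hcdef] at this ⊢
    rw [hinit s, one_mul]
    calc (∑ j, Complex.exp (-(Complex.I / ε) * ∫ u in s..s, μ j u) • P j s)
        = ∑ j, P j s := Finset.sum_congr rfl fun j _ => by rw [this j, one_smul]
      _ = 1 := hcompl s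
end
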